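/- arXiv:1301.4955 — 3 statements merged into one kernel-verified Lean document; each statement's English description precedes it below -/
import Mathlib

section
/- Let r be a distinguished vertex of a finite set V and let P be a partition of V \ {r} into non-empty parts. A map g : V → V with g(r) = r is the glue map of an r-rooted hypertree with vertex set V and Prüfer partition P if and only if g is constant on each part of P and for every v ∈ V there exists an integer k with g^k(v) = g^{k+1}(v) = r. -/
open Finset

/-- Degree of a vertex: number of hyperedges containing it. -/
def hdeg (E : Finset (Finset ℕ)) (v : ℕ) : ℕ := (E.filter (fun e => v ∈ e)).card

/-- Two vertices are adjacent if they are distinct and lie in a common hyperedge. -/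
def HAdj (E : Finset (Finset ℕ)) (v w : ℕ) : Prop := v ≠ w ∧ ∃ e ∈ E, v ∈ e ∧ w ∈ e

/-- A hypergraph is connected if any two vertices are joined by a path of
consecutively adjacent vertices. -/
def HConnected (V : Finset ℕ) (E : Finset (Finset ℕ)) : Prop :=
  ∀ v ∈ V, ∀ w ∈ V, Relation.ReflTransGen (HAdj E) v w

/-- A (finite) hypergraph on vertex set `V`: hyperedges are subsets of `V`
of cardinality at least 2. -/
def IsHypergraph (V : Finset ℕ) (E : Finset (Finset ℕ)) : Prop :=
  ∀ e ∈ E, e ⊆ V ∧ 2 ≤ e.card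

/-- A finite hypertree: a connected hypergraph with
`∑ size(e) = |V| + |E| - 1`. -/
def IsHypertree (V : Finset ℕ) (E : Finset (Finset ℕ)) : Prop :=
  IsHypergraph V E ∧ HConnected V E ∧ (∑ e ∈ E, e.card) + 1 = V.card + E.card

/-- There is a walk of length `l` from `v` to `w`. -/
def HJoined (E : Finset (Finset ℕ)) (l : ℕ) (v w : ℕ) : Prop :=
  ∃ p : ℕ → ℕ, p 0 = v ∧ p l = w ∧ ∀ i < l, HAdj E (p i) (p (i + 1))

/-- Distance between two vertices: length of a shortest joining path. -/
noncomputable def hdist (E : Finset (Finset ℕ)) (v w : ℕ) : ℕ :=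
  sInf {l | HJoined E l v w}

/-- `v` is the marked vertex of the hyperedge `e` of an `r`-rooted hypertree:
the vertex of `e` closest to the root `r`. -/
def IsMarked (E : Finset (Finset ℕ)) (r : ℕ) (e : Finset ℕ) (v : ℕ) : Prop :=
  v ∈ e ∧ ∀ w ∈ e, hdist E r v ≤ hdist E r w

/-- `P` is a partition of the finite set `S` into non-empty parts. -/
def IsPartitionOf (S : Finset ℕ) (P : Finset (Finset ℕ)) : Prop :=
  (∀ s ∈ P, s.Nonempty) ∧ (∀ s ∈ P, ∀ t ∈ P, s ≠ t → Disjoint s t) ∧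
    P.biUnion id = S

/-- `g` is the glue map of an `r`-rooted hypertree with vertex set `V` and
Prüfer partition `P`: there is a hypertree on `V` whose reduced hyperedges
are exactly the parts of `P` and such that `g` sends each element of a
reduced hyperedge to the marked vertex of the corresponding hyperedge. -/
def IsGlueMapOf (V : Finset ℕ) (r : ℕ) (P : Finset (Finset ℕ))
    (g : ℕ → ℕ) : Prop :=
  ∃ E : Finset (Finset ℕ), IsHypertree V E ∧
    ∃ m : Finset ℕ → ℕ, (∀ e ∈ E, IsMarked E r e (m e)) ∧
      P = E.image (fun e => e.erase (m e)) ∧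
      Set.InjOn (fun e : Finset ℕ => e.erase (m e)) ↑E ∧
      ∀ e ∈ E, ∀ v ∈ e.erase (m e), g v = m e

/-!
Forward direction: distance to the root is a strictly decreasing measure along `g`. In a
hypertree every non-root vertex `v` lies in a hyperedge containing a vertex closer to the root;
sending `v` to such a pair `(e, v)` maps `V \ {r}` injectively into the set of pairs
`(e, w)` with `w ∈ e \ {e_*}`, and the hypertree count `∑ |e| = |V| + |E| - 1` says both have the
same size. So every `w ∈ e \ {e_*}` arises this way, and `e_*` is strictly closer to the root.

Backward direction: with `h v` the number of steps for `g` to reach `r`, the hyperedges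
`s ∪ {g s}` for `s ∈ P` form a hypertree in which the distance to `r` is exactly `h`, so that
`g s` is the marked vertex of `s ∪ {g s}`.
-/

lemma HAdj.symm {E : Finset (Finset ℕ)} {v w : ℕ} (h : HAdj E v w) : HAdj E w v := by
  obtain ⟨hne, e, he, hv, hw⟩ := h
  exact ⟨hne.symm, e, he, hw, hv⟩

namespace HJoined

variable {E : Finset (Finset ℕ)} {l a b c : ℕ}

lemma refl (E : Finset (Finset ℕ)) (a : ℕ) : HJoined E 0 a a :=
  ⟨fun _ => a, rfl, rfl, fun _ hi => absurd hi (Nat.not_lt_zero _)⟩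

lemma eq_of_zero (h : HJoined E 0 a b) : a = b := by
  obtain ⟨p, hp0, hpl, -⟩ := h
  rw [← hp0, hpl]

lemma tail (h : HJoined E l a b) (hbc : HAdj E b c) : HJoined E (l + 1) a c := by
  obtain ⟨p, hp0, hpl, hadj⟩ := h
  refine ⟨fun i => if i ≤ l then p i else c, by simp [hp0], by simp, fun i hi => ?_⟩
  rcases Nat.lt_succ_iff_lt_or_eq.mp hi with hil | rfl
  · simpa [hil.le, Nat.succ_le_of_lt hil] using hadj i hil
  · simpa [hpl] using hbc

lemma exists_last (h : HJoined E (l + 1) a c) : ∃ b, HJoined E l a b ∧ HAdj E b c := by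
  obtain ⟨p, hp0, hpl, hadj⟩ := h
  exact ⟨p l, ⟨p, hp0, rfl, fun i hi => hadj i (by omega)⟩, hpl ▸ hadj l (by omega)⟩

lemma reflTransGen (h : HJoined E l a b) : Relation.ReflTransGen (HAdj E) a b := by
  induction l generalizing b with
  | zero => rw [h.eq_of_zero]
  | succ l ih =>
    obtain ⟨c, hac, hcb⟩ := h.exists_last
    exact (ih hac).tail hcb

end HJoined

section Distance

variable {E : Finset (Finset ℕ)} {l a b : ℕ}

lemma exists_hJoined_of_reflTransGen (h : Relation.ReflTransGen (HAdj E) a b) :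
    ∃ l, HJoined E l a b := by
  induction h with
  | refl => exact ⟨0, HJoined.refl E a⟩
  | tail _ hbc ih =>
    obtain ⟨l, hl⟩ := ih
    exact ⟨l + 1, hl.tail hbc⟩

lemma hJoined_hdist (h : ∃ l, HJoined E l a b) : HJoined E (hdist E a b) a b :=
  Nat.sInf_mem h

lemma hdist_le (h : HJoined E l a b) : hdist E a b ≤ l :=
  Nat.sInf_le h

lemma hConnected_of_reflTransGen {V : Finset ℕ} {r : ℕ}
    (h : ∀ v ∈ V, Relation.ReflTransGen (HAdj E) r v) : HConnected V E := by
  have : Std.Symm (HAdj E) := ⟨fun _ _ => HAdj.symm⟩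
  exact fun v hv w hw => (symm (h v hv)).trans (h w hw)

end Distance

namespace IsPartitionOf

variable {S : Finset ℕ} {P : Finset (Finset ℕ)}

lemma exists_mem (hP : IsPartitionOf S P) {v : ℕ} (hv : v ∈ S) : ∃ s ∈ P, v ∈ s := by
  rw [← hP.2.2] at hv
  simpa using mem_biUnion.mp hv

lemma subset (hP : IsPartitionOf S P) {s : Finset ℕ} (hs : s ∈ P) : s ⊆ S :=
  hP.2.2 ▸ subset_biUnion_of_mem id hs

lemma sum_card (hP : IsPartitionOf S P) : ∑ s ∈ P, s.card = S.card := by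
  rw [← hP.2.2]
  exact (card_biUnion fun s hs t ht hst => hP.2.1 s hs t ht hst).symm

end IsPartitionOf

theorem exists_iterate_eq_of_lt {α : Type*} {S : Set α} {g : α → α} {r : α} (d : α → ℕ)
    (hd : ∀ v ∈ S, v ≠ r → g v ∈ S ∧ d (g v) < d v) {v : α} (hv : v ∈ S) :
    ∃ k, g^[k] v = r := by
  induction hn : d v using Nat.strong_induction_on generalizing v with
  | _ n ih =>
    by_cases hvr : v = r
    · exact ⟨0, hvr⟩
    obtain ⟨hgv, hlt⟩ := hd v hv hvr
    obtain ⟨k, hk⟩ := ih _ (hn ▸ hlt) hgv rfl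
    exact ⟨k + 1, hk⟩

section Hypertree

variable {V : Finset ℕ} {E : Finset (Finset ℕ)} {r : ℕ}

lemma exists_mem_hdist_lt (hconn : HConnected V E) (hr : r ∈ V) {v : ℕ}
    (hv : v ∈ V) (hvr : v ≠ r) : ∃ e ∈ E, v ∈ e ∧ ∃ u ∈ e, hdist E r u < hdist E r v := by
  have hwalk := hJoined_hdist (exists_hJoined_of_reflTransGen (hconn r hr v hv))
  cases hd : hdist E r v with
  | zero => exact absurd (hd ▸ hwalk).eq_of_zero.symm hvr
  | succ l =>
    obtain ⟨u, hru, -, e, he, hu, hve⟩ := (hd ▸ hwalk).exists_last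
    exact ⟨e, he, hve, u, hu, Nat.lt_succ_of_le (hdist_le hru)⟩

lemma card_sigma_erase_add_one {m : Finset ℕ → ℕ}
    (hcount : (∑ e ∈ E, e.card) + 1 = V.card + E.card) (hm : ∀ e ∈ E, m e ∈ e) :
    (E.sigma fun e => e.erase (m e)).card + 1 = V.card := by
  have hsum : (∑ e ∈ E, (e.erase (m e)).card) + E.card = ∑ e ∈ E, e.card := by
    rw [← sum_congr rfl fun e he => card_erase_add_one (hm e he), sum_add_distrib, sum_const,
      smul_eq_mul, mul_one]
  rw [card_sigma]
  omega

lemma hdist_marked_lt {m : Finset ℕ → ℕ} (hE : IsHypertree V E) (hr : r ∈ V)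
    (hm : ∀ e ∈ E, IsMarked E r e (m e)) {e : Finset ℕ} (he : e ∈ E) {w : ℕ}
    (hw : w ∈ e.erase (m e)) : hdist E r (m e) < hdist E r w := by
  choose! pe hpe hvpe u hu hlt using fun v (hv : v ∈ V.erase r) =>
    exists_mem_hdist_lt hE.2.1 hr (mem_of_mem_erase hv) (ne_of_mem_erase hv)
  set T := E.sigma fun e => e.erase (m e)
  have hmaps : Set.MapsTo (fun v => (⟨pe v, v⟩ : (_ : Finset ℕ) × ℕ)) (V.erase r) T := by
    refine fun v hv => mem_sigma.mpr ⟨hpe v hv, mem_erase.mpr ⟨fun hvm => ?_, hvpe v hv⟩⟩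
    have hmu := (hm _ (hpe v hv)).2 _ (hu v hv)
    rw [← show v = m (pe v) from hvm] at hmu
    exact absurd (hlt v hv) (not_lt.mpr hmu)
  have hinj : Set.InjOn (fun v => (⟨pe v, v⟩ : (_ : Finset ℕ) × ℕ)) (V.erase r) :=
    fun _ _ _ _ h => (Sigma.mk.inj_iff.mp h).2.eq
  have hcard : T.card ≤ (V.erase r).card := by
    have hT : T.card + 1 = V.card := card_sigma_erase_add_one hE.2.2 fun e he => (hm e he).1
    have hV := card_erase_add_one hr
    omega
  obtain ⟨v, hv, hvw⟩ := surjOn_of_injOn_of_card_le _ hmaps hinj hcard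
    (show (⟨e, w⟩ : (_ : Finset ℕ) × ℕ) ∈ T from mem_sigma.mpr ⟨he, hw⟩)
  obtain ⟨rfl, rfl⟩ : pe v = e ∧ v = w := by simpa using hvw
  exact ((hm _ (hpe v hv)).2 _ (hu v hv)).trans_lt (hlt v hv)

end Hypertree

namespace IsGlueMapOf

variable {V : Finset ℕ} {P : Finset (Finset ℕ)} {r : ℕ} {g : ℕ → ℕ}

lemma eq_of_mem_part (hglue : IsGlueMapOf V r P g) :
    ∀ s ∈ P, ∀ v ∈ s, ∀ w ∈ s, g v = g w := by
  obtain ⟨E, -, m, -, rfl, -, hgm⟩ := hglue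
  intro s hs v hv w hw
  obtain ⟨e, he, rfl⟩ := mem_image.mp hs
  rw [hgm e he v hv, hgm e he w hw]

lemma exists_measure_lt (hglue : IsGlueMapOf V r P g) (hr : r ∈ V)
    (hP : IsPartitionOf (V.erase r) P) :
    ∃ d : ℕ → ℕ, ∀ v ∈ V, v ≠ r → g v ∈ V ∧ d (g v) < d v := by
  obtain ⟨E, hE, m, hm, rfl, -, hgm⟩ := hglue
  refine ⟨hdist E r, fun v hv hvr => ?_⟩
  obtain ⟨s, hs, hvs⟩ := hP.exists_mem (mem_erase.mpr ⟨hvr, hv⟩)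
  obtain ⟨e, he, rfl⟩ := mem_image.mp hs
  rw [hgm e he v hvs]
  exact ⟨(hE.1 e he).1 (hm e he).1, hdist_marked_lt hE hr hm he hvs⟩

end IsGlueMapOf

section FirstHit

variable {α : Type*}

noncomputable def firstHit (g : α → α) (r v : α) : ℕ :=
  sInf {k | g^[k] v = r}

variable {g : α → α} {r v : α}

lemma iterate_firstHit (h : ∃ k, g^[k] v = r) : g^[firstHit g r v] v = r :=
  Nat.sInf_mem h

lemma firstHit_self : firstHit g r r = 0 :=
  Nat.eq_zero_of_le_zero (Nat.sInf_le (show g^[0] r = r from rfl))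

lemma firstHit_eq_succ (h : ∃ k, g^[k] v = r) (hvr : v ≠ r) :
    firstHit g r v = firstHit g r (g v) + 1 := by
  obtain ⟨n, hn⟩ : ∃ n, firstHit g r v = n + 1 :=
    Nat.exists_eq_succ_of_ne_zero fun h0 => hvr (by simpa [h0] using iterate_firstHit h)
  have hgv : g^[n] (g v) = r := by
    simpa only [hn, Function.iterate_succ_apply] using iterate_firstHit h
  have hle : firstHit g r (g v) ≤ n := Nat.sInf_le hgv
  have hge : firstHit g r v ≤ firstHit g r (g v) + 1 :=
    Nat.sInf_le (iterate_firstHit ⟨n, hgv⟩ : g^[firstHit g r (g v)] (g v) = r)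
  omega

end FirstHit

section Cone

variable {E : Finset (Finset ℕ)} {V : Finset ℕ} {r : ℕ} {h : ℕ → ℕ}

lemma le_of_hJoined_of_adj_le (hr0 : h r = 0) (hadj : ∀ v w, HAdj E v w → h w ≤ h v + 1)
    {l v : ℕ} (hrv : HJoined E l r v) : h v ≤ l := by
  induction l generalizing v with
  | zero => rw [← hrv.eq_of_zero, hr0]
  | succ l ih =>
    obtain ⟨u, hru, huv⟩ := hrv.exists_last
    have := ih hru
    have := hadj u v huv
    omega

lemma hJoined_of_exists_adj (hr0 : h r = 0)
    (hdesc : ∀ v ∈ V, v ≠ r → ∃ u ∈ V, HAdj E u v ∧ h v = h u + 1) {v : ℕ} (hv : v ∈ V) :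
    HJoined E (h v) r v := by
  induction hn : h v using Nat.strong_induction_on generalizing v with
  | _ n ih =>
    by_cases hvr : v = r
    · subst hvr
      rw [← hn, hr0]
      exact HJoined.refl E v
    obtain ⟨u, hu, huv, hhu⟩ := hdesc v hv hvr
    subst hn
    rw [hhu]
    exact (ih _ (hhu ▸ Nat.lt_succ_self _) hu rfl).tail huv

def coneEdges (P : Finset (Finset ℕ)) (c : Finset ℕ → ℕ) : Finset (Finset ℕ) :=
  P.image fun s => insert (c s) s

variable {P : Finset (Finset ℕ)} {c : Finset ℕ → ℕ}

lemma apex_notMem (hhc : ∀ s ∈ P, ∀ v ∈ s, h v = h (c s) + 1) {s : Finset ℕ} (hs : s ∈ P) :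
    c s ∉ s := fun hcs => by
  have := hhc s hs _ hcs
  omega

lemma injOn_insert_apex (hhc : ∀ s ∈ P, ∀ v ∈ s, h v = h (c s) + 1) :
    Set.InjOn (fun s => insert (c s) s) P := by
  intro s hs t ht (hst : insert (c s) s = insert (c t) t)
  suffices hc : c s = c t by
    rw [← erase_insert (apex_notMem hhc hs), ← erase_insert (apex_notMem hhc ht), hst, hc]
  have hct : c t ∈ insert (c s) s := by rw [hst]; exact mem_insert_self _ _
  have hcs : c s ∈ insert (c t) t := by rw [← hst]; exact mem_insert_self _ _
  rcases mem_insert.mp hct with h1 | h1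
  · exact h1.symm
  rcases mem_insert.mp hcs with h2 | h2
  · exact h2
  have := hhc s hs _ h1
  have := hhc t ht _ h2
  omega

lemma adj_coneEdges_le (hhc : ∀ s ∈ P, ∀ v ∈ s, h v = h (c s) + 1) {v w : ℕ}
    (hvw : HAdj (coneEdges P c) v w) : h w ≤ h v + 1 := by
  obtain ⟨hne, e, he, hv, hw⟩ := hvw
  obtain ⟨s, hs, rfl⟩ := mem_image.mp he
  rcases mem_insert.mp hv with rfl | hv <;> rcases mem_insert.mp hw with rfl | hw
  · exact absurd rfl hne
  · rw [hhc s hs w hw]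
  · rw [hhc s hs v hv]
    omega
  · rw [hhc s hs v hv, hhc s hs w hw]
    omega

variable (hP : IsPartitionOf (V.erase r) P) (hcV : ∀ s ∈ P, c s ∈ V) (hr0 : h r = 0)
  (hhc : ∀ s ∈ P, ∀ v ∈ s, h v = h (c s) + 1)
include hP hcV hr0 hhc

lemma hJoined_coneEdges {v : ℕ} (hv : v ∈ V) : HJoined (coneEdges P c) (h v) r v := by
  refine hJoined_of_exists_adj hr0 (fun v hv hvr => ?_) hv
  obtain ⟨s, hs, hvs⟩ := hP.exists_mem (mem_erase.mpr ⟨hvr, hv⟩)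
  refine ⟨c s, hcV s hs, ⟨fun hcv => apex_notMem hhc hs (hcv ▸ hvs), insert (c s) s,
    mem_image_of_mem _ hs, mem_insert_self _ _, mem_insert_of_mem hvs⟩, hhc s hs v hvs⟩

lemma hdist_coneEdges {v : ℕ} (hv : v ∈ V) : hdist (coneEdges P c) r v = h v := by
  have hj := hJoined_coneEdges hP hcV hr0 hhc hv
  exact le_antisymm (hdist_le hj)
    (le_of_hJoined_of_adj_le hr0 (fun _ _ => adj_coneEdges_le hhc) (hJoined_hdist ⟨_, hj⟩))

lemma isHypertree_coneEdges (hr : r ∈ V) : IsHypertree V (coneEdges P c) := by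
  have hinj := injOn_insert_apex hhc
  refine ⟨?_, hConnected_of_reflTransGen fun v hv =>
    (hJoined_coneEdges hP hcV hr0 hhc hv).reflTransGen, ?_⟩
  · rintro e he
    obtain ⟨s, hs, rfl⟩ := mem_image.mp he
    refine ⟨insert_subset (hcV s hs) ((hP.subset hs).trans (erase_subset _ _)), ?_⟩
    rw [card_insert_of_notMem (apex_notMem hhc hs)]
    have := (hP.1 s hs).card_pos
    omega
  · have hsum : ∑ e ∈ coneEdges P c, e.card = ∑ s ∈ P, s.card + P.card := by
      rw [coneEdges, sum_image fun s hs t ht => hinj hs ht, card_eq_sum_ones, ← sum_add_distrib]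
      exact sum_congr rfl fun s hs => card_insert_of_notMem (apex_notMem hhc hs)
    have hcard : (coneEdges P c).card = P.card := card_image_of_injOn hinj
    have := hP.sum_card
    have := card_erase_add_one hr
    omega

lemma isGlueMapOf_coneEdges (hr : r ∈ V) {g : ℕ → ℕ} (hgc : ∀ s ∈ P, ∀ v ∈ s, g v = c s) :
    IsGlueMapOf V r P g := by
  have hinj := injOn_insert_apex hhc
  set m : Finset ℕ → ℕ := fun e => c (Function.invFunOn (fun s => insert (c s) s) P e)
  have hm : ∀ s ∈ P, m (insert (c s) s) = c s := fun s hs =>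
    congrArg c (hinj.leftInvOn_invFunOn hs)
  have herase : ∀ s ∈ P, (insert (c s) s).erase (m (insert (c s) s)) = s := fun s hs => by
    rw [hm s hs, erase_insert (apex_notMem hhc hs)]
  refine ⟨coneEdges P c, isHypertree_coneEdges hP hcV hr0 hhc hr, m, ?_, ?_, ?_, ?_⟩
  · intro e he
    obtain ⟨s, hs, rfl⟩ := mem_image.mp he
    rw [hm s hs]
    refine ⟨mem_insert_self _ _, fun w hw => ?_⟩
    rw [hdist_coneEdges hP hcV hr0 hhc (hcV s hs)]
    rcases mem_insert.mp hw with rfl | hws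
    · exact (hdist_coneEdges hP hcV hr0 hhc (hcV s hs)).ge
    · rw [hdist_coneEdges hP hcV hr0 hhc (mem_of_mem_erase (hP.subset hs hws)), hhc s hs w hws]
      omega
  · rw [coneEdges, image_image]
    exact ((image_congr herase).trans image_id).symm
  · intro e₁ he₁ e₂ he₂ hst
    obtain ⟨s, hs, rfl⟩ := mem_image.mp (mem_coe.mp he₁)
    obtain ⟨t, ht, rfl⟩ := mem_image.mp (mem_coe.mp he₂)
    have hst : s = t := by simpa only [herase s hs, herase t ht] using hst
    rw [hst]
  · intro e he v hv
    obtain ⟨s, hs, rfl⟩ := mem_image.mp he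
    rw [herase s hs] at hv
    rw [hgc s hs v hv, hm s hs]

end Cone

theorem isGlueMapOf_of_height {V : Finset ℕ} {P : Finset (Finset ℕ)} {r : ℕ} {g : ℕ → ℕ}
    (hr : r ∈ V) (hP : IsPartitionOf (V.erase r) P) (h : ℕ → ℕ) (hr0 : h r = 0)
    (hgV : ∀ v ∈ V, v ≠ r → g v ∈ V) (hgh : ∀ v ∈ V, v ≠ r → h v = h (g v) + 1)
    (hconst : ∀ s ∈ P, ∀ v ∈ s, ∀ w ∈ s, g v = g w) : IsGlueMapOf V r P g := by
  have hsV : ∀ s ∈ P, ∀ v ∈ s, v ∈ V ∧ v ≠ r := fun s hs v hv =>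
    (mem_erase.mp (hP.subset hs hv)).symm
  choose! c hc using fun s (hs : s ∈ P) =>
    (hP.1 s hs).imp fun x hx => (fun v hv => hconst s hs v hv x hx : ∀ v ∈ s, g v = g x)
  refine isGlueMapOf_coneEdges hP (fun s hs => ?_) hr0 (fun s hs v hv => ?_) hr hc
  · obtain ⟨x, hx⟩ := hP.1 s hs
    rw [← hc s hs x hx]
    exact hgV x (hsV s hs x hx).1 (hsV s hs x hx).2
  · rw [← hc s hs v hv]
    exact hgh v (hsV s hs v hv).1 (hsV s hs v hv).2

/-- a map `g : V → V` fixing the root `r` is the glue map of an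
`r`-rooted hypertree with vertex set `V` and Prüfer partition `P` if and only
if `g` is constant on each part of `P` and every vertex reaches `r` under
iteration of `g`. -/
theorem stmt11 (V : Finset ℕ) (r : ℕ) (hr : r ∈ V)
    (P : Finset (Finset ℕ)) (hP : IsPartitionOf (V.erase r) P)
    (g : ℕ → ℕ) (hgr : g r = r) (hgV : ∀ v ∈ V, g v ∈ V) :
    IsGlueMapOf V r P g ↔
      ((∀ s ∈ P, ∀ v ∈ s, ∀ w ∈ s, g v = g w) ∧
       ∀ v ∈ V, ∃ k : ℕ, g^[k] v = r ∧ g^[k + 1] v = r) := by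
  constructor
  · intro hglue
    obtain ⟨d, hd⟩ := hglue.exists_measure_lt hr hP
    refine ⟨hglue.eq_of_mem_part, fun v hv => ?_⟩
    obtain ⟨k, hk⟩ := exists_iterate_eq_of_lt (S := V) d hd hv
    exact ⟨k, hk, by rw [Function.iterate_succ_apply', hk, hgr]⟩
  · rintro ⟨hconst, hreach⟩
    exact isGlueMapOf_of_height hr hP (firstHit g r) firstHit_self (fun v hv _ => hgV v hv)
      (fun v hv hvr => firstHit_eq_succ ((hreach v hv).imp fun _ => And.left) hvr) hconst
end

section
/- Let T be a non-trivial finite rooted hypertree with vertex set V, root r, and hyperedge set E, and let e be a hyperedge of T with reduced hyperedge e'. Then E \ {e} is the hyperedge set of an r-rooted hypertree with vertex set V \ e' if and only if e is of leaf-type. -/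
open Finset

/-!
Removing `e` deletes the vertices of `e' = e \ {v}` from `V`. The remaining hyperedges stay inside
`V \ e'` exactly when no vertex of `e'` lies in another hyperedge, i.e. when `e` is of leaf-type.
Conversely, for a leaf-type `e` connectivity survives because collapsing `e'` onto `v` turns every
step of a path in `T` into at most one step avoiding `e`, and the count
`∑ |f| = |V| + |E| - 1` drops by `|e|` on the left and by `(|e| - 1) + 1` on the right.
-/

theorem hdeg_eq_one_iff {E : Finset (Finset ℕ)} {e : Finset ℕ} {w : ℕ} (he : e ∈ E)
    (hw : w ∈ e) : hdeg E w = 1 ↔ ∀ f ∈ E, w ∈ f → f = e := by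
  have he' : e ∈ E.filter (w ∈ ·) := mem_filter.mpr ⟨he, hw⟩
  rw [hdeg, card_eq_one]
  constructor
  · rintro ⟨a, ha⟩ f hf hwf
    have hf' : f ∈ E.filter (w ∈ ·) := mem_filter.mpr ⟨hf, hwf⟩
    rw [ha, mem_singleton] at hf' he'
    rw [hf', he']
  · intro h
    exact ⟨e, eq_singleton_iff_unique_mem.mpr
      ⟨he', fun f hf => h f (mem_filter.mp hf).1 (mem_filter.mp hf).2⟩⟩

theorem isHypergraph_sdiff_erase_iff {V : Finset ℕ} {E : Finset (Finset ℕ)}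
    (hE : IsHypergraph V E) (e s : Finset ℕ) :
    IsHypergraph (V \ s) (E.erase e) ↔ ∀ w ∈ s, ∀ f ∈ E, w ∈ f → f = e := by
  constructor
  · intro h w hws f hf hwf
    by_contra hfe
    exact (mem_sdiff.mp ((h f (mem_erase.mpr ⟨hfe, hf⟩)).1 hwf)).2 hws
  · intro h f hf
    obtain ⟨hfe, hfE⟩ := mem_erase.mp hf
    refine ⟨fun x hx => mem_sdiff.mpr ⟨(hE f hfE).1 hx, fun hxs => hfe (h x hxs f hfE hx)⟩,
      (hE f hfE).2⟩

def collapseOnto (e : Finset ℕ) (v x : ℕ) : ℕ := if x ∈ e.erase v then v else x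

section Collapse

variable {E : Finset (Finset ℕ)} {e : Finset ℕ} {v : ℕ}

theorem collapseOnto_of_notMem {x : ℕ} (hx : x ∉ e.erase v) : collapseOnto e v x = x :=
  if_neg hx

theorem collapseOnto_of_mem {x : ℕ} (hx : x ∈ e) : collapseOnto e v x = v := by
  by_cases hxv : x = v
  · subst hxv
    exact collapseOnto_of_notMem (notMem_erase x e)
  · exact if_pos (mem_erase.mpr ⟨hxv, hx⟩)

theorem HAdj.reflTransGen_collapseOnto (hleaf : ∀ w ∈ e.erase v, ∀ f ∈ E, w ∈ f → f = e)
    {a b : ℕ} (hab : HAdj E a b) :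
    Relation.ReflTransGen (HAdj (E.erase e)) (collapseOnto e v a) (collapseOnto e v b) := by
  obtain ⟨hne, f, hfE, haf, hbf⟩ := hab
  by_cases hfe : f = e
  · subst hfe
    rw [collapseOnto_of_mem haf, collapseOnto_of_mem hbf]
  · have hout : ∀ x ∈ f, x ∉ e.erase v := fun x hx hxe => hfe (hleaf x hxe f hfE hx)
    rw [collapseOnto_of_notMem (hout a haf), collapseOnto_of_notMem (hout b hbf)]
    exact .single ⟨hne, f, mem_erase.mpr ⟨hfe, hfE⟩, haf, hbf⟩

theorem HConnected.sdiff_erase {V : Finset ℕ} (hC : HConnected V E)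
    (hleaf : ∀ w ∈ e.erase v, ∀ f ∈ E, w ∈ f → f = e) :
    HConnected (V \ e.erase v) (E.erase e) := by
  intro x hx y hy
  rw [mem_sdiff] at hx hy
  have h : Relation.ReflTransGen (HAdj (E.erase e)) (collapseOnto e v x) (collapseOnto e v y) :=
    (hC x hx.1 y hy.1).lift' (collapseOnto e v) fun _ _ hab => hab.reflTransGen_collapseOnto hleaf
  rwa [collapseOnto_of_notMem hx.2, collapseOnto_of_notMem hy.2] at h

end Collapse

theorem sum_card_add_one_sdiff_erase {V : Finset ℕ} {E : Finset (Finset ℕ)} {e : Finset ℕ}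
    {v : ℕ} (hcount : (∑ f ∈ E, f.card) + 1 = V.card + E.card) (he : e ∈ E) (heV : e ⊆ V)
    (hv : v ∈ e) :
    (∑ f ∈ E.erase e, f.card) + 1 = (V \ e.erase v).card + (E.erase e).card := by
  have hsum : (∑ f ∈ E.erase e, f.card) + e.card = ∑ f ∈ E, f.card := sum_erase_add E _ he
  have hsub : e.erase v ⊆ V := (erase_subset v e).trans heV
  have hVc := card_sdiff_of_subset hsub
  have hle := card_le_card hsub
  have hEc := card_erase_of_mem he
  have hec := card_erase_of_mem hv
  have hE1 : 1 ≤ E.card := card_pos.mpr ⟨e, he⟩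
  have he1 : 1 ≤ e.card := card_pos.mpr ⟨v, hv⟩
  omega

theorem stmt14_general (V : Finset ℕ) (E : Finset (Finset ℕ)) (r : ℕ)
    (hT : IsHypertree V E)
    (e : Finset ℕ) (he : e ∈ E) (v : ℕ) (hv : IsMarked E r e v) :
    IsHypertree (V \ e.erase v) (E.erase e) ↔
      ∀ w ∈ e.erase v, hdeg E w = 1 := by
  obtain ⟨hHG, hConn, hCount⟩ := hT
  have hleaf : (∀ w ∈ e.erase v, hdeg E w = 1) ↔
      ∀ w ∈ e.erase v, ∀ f ∈ E, w ∈ f → f = e :=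
    forall₂_congr fun w hw => hdeg_eq_one_iff he (mem_of_mem_erase hw)
  rw [hleaf]
  exact ⟨fun h => (isHypergraph_sdiff_erase_iff hHG e _).1 h.1, fun h =>
    ⟨(isHypergraph_sdiff_erase_iff hHG e _).2 h, hConn.sdiff_erase h,
      sum_card_add_one_sdiff_erase hCount he (hHG e he).1 hv.1⟩⟩

/-- for a non-trivial finite rooted hypertree and a hyperedge
`e` with marked vertex `v`, removing `e` yields an `r`-rooted hypertree on
`V \ e'` if and only if `e` is of leaf-type. -/
theorem stmt14 (V : Finset ℕ) (E : Finset (Finset ℕ)) (r : ℕ)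
    (hT : IsHypertree V E) (hr : r ∈ V) (hnt : 2 ≤ E.card)
    (e : Finset ℕ) (he : e ∈ E) (v : ℕ) (hv : IsMarked E r e v) :
    IsHypertree (V \ e.erase v) (E.erase e) ↔
      ∀ w ∈ e.erase v, hdeg E w = 1 :=
  stmt14_general V E r hT e he v hv
end

section
/- Let P be a partition of a subset of {1, ..., n-1} into k non-empty parts and let W be a word of length k over the alphabet {1, ..., n} whose last letter is n. Then at least one part of P is of leaf-type with respect to the first k-1 letters of W, i.e., some part contains no letter occurring in W. -/
open Finset

/-- Pigeonhole: if every set of `P` met `A`, their traces on `A` would be disjoint nonempty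
subsets of `A`, more of them than `A` has elements. -/
theorem Finset.exists_disjoint_of_card_lt {α : Type*} [DecidableEq α] {P : Finset (Finset α)}
    {A : Finset α} (hdisj : (P : Set (Finset α)).PairwiseDisjoint id)
    (hcard : #A < #P) : ∃ s ∈ P, Disjoint s A := by
  by_contra! hmeet
  have htraces : (P : Set (Finset α)).PairwiseDisjoint (· ∩ A) := fun s hs t ht hst =>
    (hdisj hs ht hst).mono inter_subset_left inter_subset_left
  have hle : #P ≤ #(P.biUnion (· ∩ A)) :=
    card_le_card_biUnion htraces fun s hs => not_disjoint_iff_nonempty_inter.mp (hmeet s hs)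
  have hsub : P.biUnion (· ∩ A) ⊆ A := biUnion_subset.mpr fun _ _ => inter_subset_right
  exact (hcard.trans_le (hle.trans (card_le_card hsub))).false

theorem stmt16_general (n k : ℕ) (P : Finset (Finset ℕ))
    (hdisj : ∀ s ∈ P, ∀ t ∈ P, s ≠ t → Disjoint s t)
    (hk : P.card = k)
    (W : List ℕ) (hW : W.length = k)
    (hWlast : W.getLast? = some n) :
    ∃ s ∈ P, ∀ x ∈ s, x ∉ W.take (k - 1) := by
  have hk_pos : 0 < k := hW ▸ List.length_pos_iff.mpr fun h => by simp [h] at hWlast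
  have hcard : #(W.take (k - 1)).toFinset < #P :=
    calc #(W.take (k - 1)).toFinset ≤ (W.take (k - 1)).length := List.toFinset_card_le _
      _ ≤ k - 1 := List.length_take_le _ _
      _ < #P := by omega
  obtain ⟨s, hs, hsW⟩ := 
    exists_disjoint_of_card_lt (fun s hs t ht hst => hdisj s hs t ht hst) hcard
  exact ⟨s, hs, fun x hx hxW => disjoint_left.mp hsW hx (List.mem_toFinset.mpr hxW)⟩

/-- if `P` is a partition of a subset of `{1, …, n-1}` into `k`
non-empty parts and `W` is a word of length `k` over `{1, …, n}` whose last
letter is `n`, then some part of `P` contains no letter occurring among the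
first `k - 1` letters of `W`. -/
theorem stmt16 (n k : ℕ) (P : Finset (Finset ℕ))
    (hparts : ∀ s ∈ P, s.Nonempty ∧ s ⊆ Finset.Icc 1 (n - 1))
    (hdisj : ∀ s ∈ P, ∀ t ∈ P, s ≠ t → Disjoint s t)
    (hk : P.card = k)
    (W : List ℕ) (hW : W.length = k) (hWmem : ∀ w ∈ W, w ∈ Finset.Icc 1 n)
    (hWlast : W.getLast? = some n) :
    ∃ s ∈ P, ∀ x ∈ s, x ∉ W.take (k - 1) :=
  stmt16_general n k P hdisj hk W hW hWlast
end
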